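/- If a cap in (ZMod 3)^4 consists of five pairs of points, each pair summing with a fixed point a to 0, and eight of the ten points lie in a common affine hyperplane H, then a ∈ H and those eight points consist of four of the five pairs. -/

import Mathlib

abbrev V4 := Fin 4 → ZMod 3

def IsCap (C : Set V4) : Prop :=
  ∀ a ∈ C, ∀ b ∈ C, ∀ c ∈ C, a ≠ b → a ≠ c → b ≠ c → a + b + c ≠ 0

/-!
At most two pairs meet the two points of the cap missing from `H`, so some pair lies in `H`, and
line-closure puts `a` in `H`. If the missing points lay in different pairs, every pair would meet
`H`, hence lie in `H` together with `a`, so the five vectors `dᵢ - a` would lie in the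
three-dimensional direction space `W`. The cap condition makes any three of them linearly
independent, i.e. they would form a 5-arc in the projective plane over `𝔽₃`; but arcs there have
at most four points. Hence the missing points form one pair.
-/

open Module Submodule Function Finset

lemma Function.injective_of_ncard_range_eq {α β : Type*} [Finite α] {f : α → β}
    (h : (Set.range f).ncard = Nat.card α) : Injective f := by
  rw [← Set.injOn_univ, ← Set.ncard_image_iff, Set.image_univ, h, Set.ncard_univ]

lemma ncard_le_card_filter_add_card_filter {ι α : Type*} [Fintype ι] [DecidableEq α]
    {d d' : ι → α} {E : Set α} [DecidablePred (· ∈ E)] (hE : E ⊆ Set.range d ∪ Set.range d') :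
    E.ncard ≤ #{i | d i ∈ E} + #{i | d' i ∈ E} := by
  set A : Finset ι := {i | d i ∈ E}
  set B : Finset ι := {i | d' i ∈ E}
  have hsub : E ⊆ ↑(A.image d ∪ B.image d') := by
    intro x hx
    rcases hE hx with ⟨i, rfl⟩ | ⟨i, rfl⟩ <;> simp only [A, B, coe_union, coe_image, coe_filter]
    exacts [Or.inl ⟨i, ⟨mem_univ i, hx⟩, rfl⟩, Or.inr ⟨i, ⟨mem_univ i, hx⟩, rfl⟩]
  calc E.ncard ≤ #(A.image d ∪ B.image d') :=
        (Set.ncard_le_ncard hsub).trans_eq (Set.ncard_coe_finset _)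
    _ ≤ _ := (card_union_le _ _).trans (add_le_add card_image_le card_image_le)

lemma eq_setOf_of_mem_iff {ι α : Type*} {d d' : ι → α} {E : Set α} {s : Finset ι}
    (hE : E ⊆ Set.range d ∪ Set.range d') (hs : ∀ i, i ∈ s ↔ d i ∈ E)
    (hs' : ∀ i, i ∈ s ↔ d' i ∈ E) : E = {x | ∃ i ∈ s, x = d i ∨ x = d' i} := by
  ext x
  constructor
  · intro hx
    rcases hE hx with ⟨i, rfl⟩ | ⟨i, rfl⟩
    exacts [⟨i, (hs i).2 hx, Or.inl rfl⟩, ⟨i, (hs' i).2 hx, Or.inr rfl⟩]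
  · rintro ⟨i, hi, rfl | rfl⟩
    exacts [(hs i).1 hi, (hs' i).1 hi]

lemma Finset.eq_of_two_mul_card_union_le {α : Type*} [DecidableEq α] {s t : Finset α}
    (h : 2 * #(s ∪ t) ≤ #s + #t) : s = t := by
  have hs := card_le_card (subset_union_left (s₁ := s) (s₂ := t))
  have ht := card_le_card (subset_union_right (s₁ := s) (s₂ := t))
  rw [eq_of_subset_of_card_le subset_union_left (by omega : #(s ∪ t) ≤ #s),
    ← eq_of_subset_of_card_le subset_union_right (by omega : #(s ∪ t) ≤ #t)]

section CharThree

variable {M : Type*} [AddCommGroup M] [Module (ZMod 3) M]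

lemma add_add_self_eq_zero (x : M) : x + x + x = 0 := by
  have h : (3 : ZMod 3) • x = 0 := by rw [show (3 : ZMod 3) = 0 from rfl, zero_smul]
  rw [← h]
  module

lemma sub_mem_of_add_add_eq_zero {W : Submodule (ZMod 3) M} {v x y z : M} (hxyz : x + y + z = 0)
    (hx : x - v ∈ W) (hy : y - v ∈ W) : z - v ∈ W := by
  have h : z - v = -((x - v) + (y - v)) := by
    linear_combination (norm := module) hxyz - add_add_self_eq_zero v
  rw [h]
  exact W.neg_mem (W.add_mem hx hy)

lemma smul_sub_add_eq_or {a x x' : M} (h : a + x + x' = 0) {c : ZMod 3} (hc : c ≠ 0) :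
    c • (x - a) + a = x ∨ c • (x - a) + a = x' := by
  obtain rfl | rfl : c = 1 ∨ c = 2 := by revert c; decide
  · left
    module
  · right
    linear_combination (norm := module) -h + add_add_self_eq_zero x

end CharThree

theorem linearIndependent_triple_iff {K V : Type*} [DivisionRing K] [AddCommGroup V] [Module K V]
    {x y z : V} :
    LinearIndependent K ![x, y, z] ↔ LinearIndependent K ![y, z] ∧ x ∉ span K {y, z} := by
  rw [linearIndependent_finSucc]
  simp [Matrix.range_cons, Set.pair_comm]

set_option synthInstance.maxSize 1000 in
lemma exists_two_of_three_add_mul_eq_zero : ∀ c₀ c₁ c₂ b₀ b₁ b₂ : ZMod 3,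
    c₀ ≠ 0 → c₁ ≠ 0 → c₂ ≠ 0 → b₀ ≠ 0 → b₁ ≠ 0 → b₂ ≠ 0 → ∃ g : ZMod 3,
      (c₀ + g * b₀ = 0 ∧ c₁ + g * b₁ = 0) ∨ (c₀ + g * b₀ = 0 ∧ c₂ + g * b₂ = 0) ∨
        (c₁ + g * b₁ = 0 ∧ c₂ + g * b₂ = 0) := by
  decide

theorem not_forall_linearIndependent_triple {V : Type*} [AddCommGroup V] [Module (ZMod 3) V]
    (hV : finrank (ZMod 3) V = 3) (y : Fin 5 → V) :
    ¬ ∀ i j k, i ≠ j → i ≠ k → j ≠ k → LinearIndependent (ZMod 3) ![y i, y j, y k] := by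
  intro h
  have hnot : ∀ i j k, i ≠ j → i ≠ k → j ≠ k → ∀ b c : ZMod 3, b • y j + c • y k ≠ y i :=
    fun i j k hij hik hjk b c hbc =>
      (linearIndependent_triple_iff.1 (h i j k hij hik hjk)).2 (mem_span_pair.2 ⟨b, c, hbc⟩)
  have hcoords : ∀ m, 2 < m → ∃ c₀ c₁ c₂ : ZMod 3, c₀ ≠ 0 ∧ c₁ ≠ 0 ∧ c₂ ≠ 0 ∧
      c₀ • y 0 + c₁ • y 1 + c₂ • y 2 = y m := by
    intro m hm
    have htop := (h 0 1 2 (by decide) (by decide) (by decide)).span_eq_top_of_card_eq_finrank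
      (by simp [hV])
    obtain ⟨c, hc⟩ := (mem_span_range_iff_exists_fun _).1 (htop ▸ mem_top : y m ∈ span _ _)
    simp only [Fin.sum_univ_three, Matrix.cons_val] at hc
    refine ⟨c 0, c 1, c 2, fun h0 => ?_, fun h1 => ?_, fun h2 => ?_, hc⟩
    · exact hnot m 1 2 (by omega) (by omega) (by decide) _ _ (by simpa [h0] using hc)
    · exact hnot m 0 2 (by omega) (by omega) (by decide) _ _ (by simpa [h1] using hc)
    · exact hnot m 0 1 (by omega) (by omega) (by decide) _ _ (by simpa [h2] using hc)
  obtain ⟨c₀, c₁, c₂, hc₀, hc₁, hc₂, hc⟩ := hcoords 3 (by decide)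
  obtain ⟨b₀, b₁, b₂, hb₀, hb₁, hb₂, hb⟩ := hcoords 4 (by decide)
  -- `y 3 + g • y 4` has two vanishing coordinates in the basis `y 0, y 1, y 2`
  obtain ⟨g, ⟨h₀, h₁⟩ | ⟨h₀, h₂⟩ | ⟨h₁, h₂⟩⟩ :=
    exists_two_of_three_add_mul_eq_zero c₀ c₁ c₂ b₀ b₁ b₂ hc₀ hc₁ hc₂ hb₀ hb₁ hb₂
  · exact hnot 3 4 2 (by decide) (by decide) (by decide) (-g) (c₂ + g * b₂)
      (by linear_combination (norm := module) g • hb + hc - h₀ • y 0 - h₁ • y 1)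
  · exact hnot 3 4 1 (by decide) (by decide) (by decide) (-g) (c₁ + g * b₁)
      (by linear_combination (norm := module) g • hb + hc - h₀ • y 0 - h₂ • y 2)
  · exact hnot 3 4 0 (by decide) (by decide) (by decide) (-g) (c₀ + g * b₀)
      (by linear_combination (norm := module) g • hb + hc - h₁ • y 1 - h₂ • y 2)

section ALines

variable {ι : Type*} {a : V4} {d d' : ι → V4}

lemma aLines_sub_ne_zero (hpair : ∀ i, a + d i + d' i = 0) (hinj : Injective (Sum.elim d d'))
    (i : ι) : d i - a ≠ 0 := by
  intro h
  refine hinj.ne (Sum.inl_ne_inr (a := i) (b := i)) ?_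
  show d i = d' i
  linear_combination 2 * h - hpair i + add_add_self_eq_zero a

lemma aLines_ne_of_ne (hinj : Injective (Sum.elim d d')) {i j : ι} (hij : i ≠ j) {x y : V4}
    (hx : x = d i ∨ x = d' i) (hy : y = d j ∨ y = d' j) : x ≠ y := by
  rcases hx with rfl | rfl <;> rcases hy with rfl | rfl
  exacts [hinj.ne (Sum.inl_injective.ne hij), hinj.ne Sum.inl_ne_inr, hinj.ne Sum.inr_ne_inl,
    hinj.ne (Sum.inr_injective.ne hij)]

lemma aLines_smul_sub_ne_sub (hpair : ∀ i, a + d i + d' i = 0) (hinj : Injective (Sum.elim d d'))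
    {i j : ι} (hij : i ≠ j) (c : ZMod 3) : c • (d j - a) ≠ d i - a := by
  intro h
  by_cases hc : c = 0
  · exact aLines_sub_ne_zero hpair hinj i (by rw [← h, hc, zero_smul])
  refine aLines_ne_of_ne hinj hij (Or.inl rfl) (smul_sub_add_eq_or (hpair j) hc) ?_
  rw [h, sub_add_cancel]

lemma aLines_linearIndependent_sub (hpair : ∀ i, a + d i + d' i = 0)
    (hinj : Injective (Sum.elim d d')) (hcap : IsCap (Set.range d ∪ Set.range d')) {i j k : ι}
    (hij : i ≠ j) (hik : i ≠ k) (hjk : j ≠ k) :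
    LinearIndependent (ZMod 3) ![d i - a, d j - a, d k - a] := by
  have hmem : ∀ {l x}, (x = d l ∨ x = d' l) → x ∈ Set.range d ∪ Set.range d' := by
    rintro l x (rfl | rfl)
    exacts [Or.inl ⟨l, rfl⟩, Or.inr ⟨l, rfl⟩]
  rw [linearIndependent_triple_iff, linearIndependent_fin2]
  refine ⟨⟨aLines_sub_ne_zero hpair hinj k, aLines_smul_sub_ne_sub hpair hinj hjk⟩, ?_⟩
  intro hspan
  obtain ⟨b, c, hbc⟩ := mem_span_pair.1 hspan
  by_cases hb : b = 0
  · exact aLines_smul_sub_ne_sub hpair hinj hik c (by simpa [hb] using hbc)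
  by_cases hc : c = 0
  · exact aLines_smul_sub_ne_sub hpair hinj hij b (by simpa [hc] using hbc)
  have hj := smul_sub_add_eq_or (hpair j) hb
  have hk := smul_sub_add_eq_or (hpair k) hc
  have hi : d' i = d i ∨ d' i = d' i := Or.inr rfl
  -- `b • (d j - a) + a`, `c • (d k - a) + a` and `d' i` are distinct cap points summing to zero
  exact hcap _ (hmem hj) _ (hmem hk) _ (hmem hi) (aLines_ne_of_ne hinj hjk hj hk)
    (aLines_ne_of_ne hinj hij.symm hj hi) (aLines_ne_of_ne hinj hik.symm hk hi)
    (by linear_combination (norm := module) hbc + hpair i)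

end ALines

lemma aLines_exists_sub_notMem {a : V4} {d d' : Fin 5 → V4} (hpair : ∀ i, a + d i + d' i = 0)
    (hinj : Injective (Sum.elim d d')) (hcap : IsCap (Set.range d ∪ Set.range d'))
    {W : Submodule (ZMod 3) V4} (hW : finrank (ZMod 3) W = 3) : ∃ i, d i - a ∉ W := by
  by_contra! hmem
  refine not_forall_linearIndependent_triple hW (fun i => ⟨d i - a, hmem i⟩)
    fun i j k hij hik hjk => LinearIndependent.of_comp W.subtype ?_
  convert aLines_linearIndependent_sub hpair hinj hcap hij hik hjk using 1
  ext t
  fin_cases t <;> rfl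

theorem eight_points_in_hyperplane (a : V4) (d d' : Fin 5 → V4)
    (hpair : ∀ i, a + d i + d' i = 0)
    (S : Set V4) (hS : S = Set.range d ∪ Set.range d')
    (hcap : IsCap S) (hcard : S.ncard = 10)
    (W : Submodule (ZMod 3) V4) (hW : Module.finrank (ZMod 3) W = 3)
    (v : V4) (H : Set V4) (hH : H = {x | x - v ∈ W})
    (E : Set V4) (hES : E ⊆ S) (hEcard : E.ncard = 8) (hEH : E ⊆ H) :
    a ∈ H ∧ ∃ s : Finset (Fin 5), s.card = 4 ∧
      E = {x | ∃ i ∈ s, x = d i ∨ x = d' i} := by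
  classical
  subst hS hH
  have hinj : Injective (Sum.elim d d') :=
    injective_of_ncard_range_eq (by rw [Set.Sum.elim_range, hcard]; simp)
  set A : Finset (Fin 5) := {i | d i ∈ E}
  set B : Finset (Fin 5) := {i | d' i ∈ E}
  have hAB : 8 ≤ #A + #B := hEcard ▸ ncard_le_card_filter_add_card_filter hES
  obtain ⟨i, hi⟩ := inter_nonempty_of_card_lt_card_add_card (subset_univ A) (subset_univ B)
    (by simp only [card_univ, Fintype.card_fin]; omega)
  obtain ⟨hdi, hd'i⟩ : d i ∈ E ∧ d' i ∈ E := by simpa [A, B] using hi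
  have haH : a - v ∈ W :=
    sub_mem_of_add_add_eq_zero (by linear_combination hpair i) (hEH hdi) (hEH hd'i)
  refine ⟨haH, ?_⟩
  by_cases hcover : A ∪ B = univ
  · obtain ⟨j, hj⟩ := aLines_exists_sub_notMem hpair hinj hcap hW
    have hjE : d j ∈ E ∨ d' j ∈ E := by
      simpa [A, B] using (hcover ▸ mem_univ j : j ∈ A ∪ B)
    have hjH : d j - v ∈ W := by
      rcases hjE with h | h
      · exact hEH h
      · exact sub_mem_of_add_add_eq_zero (by linear_combination hpair j) haH (hEH h)
    exact absurd (by simpa using W.sub_mem hjH haH) hj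
  · have hunion : #(A ∪ B) < 5 := by simpa using card_lt_card (ssubset_univ_iff.2 hcover)
    have hAB' : A = B := eq_of_two_mul_card_union_le (by omega)
    have hA : #A ≤ #(A ∪ B) := card_le_card subset_union_left
    refine ⟨A, by rw [← hAB'] at hAB; omega, ?_⟩
    exact eq_setOf_of_mem_iff hES (fun j => by simp [A]) (fun j => by simp [hAB', B])
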